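/- The pair operator ζ† equals −(4/sin δ) Σ_{1 ≤ x < y ≤ L} w_x w_y c_x† c_y†. -/
import Mathlib


noncomputable section

/-- `w_x = sin(δ/2)` for odd `x`, `cos(δ/2)` for even `x`. -/
def wR (δ : ℝ) (x : ℕ) : ℝ := if Odd x then Real.sin (δ/2) else Real.cos (δ/2)

/-- The antisymmetric coefficient matrix `F_{x,y}`. -/
def Fc (L : ℕ) (δ : ℝ) (x y : ℕ) : ℂ :=
  if y = x + 1 ∨ (x = 1 ∧ y = L) then -(Real.sin δ) / 2
  else if x = y + 1 ∨ (x = L ∧ y = 1) then (Real.sin δ) / 2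
  else 0

def epsC (L x u : ℕ) : ℂ := if x = L then 1 else if u ≤ x then 1 else -1

def alphaC (L : ℕ) (δ : ℝ) (x u : ℕ) : ℂ :=
  ((Real.sin δ : ℂ))⁻¹ * epsC L x u * (wR δ u : ℂ)

def gC (L u v a b : ℕ) : ℂ := epsC L a u * epsC L b v - epsC L a v * epsC L b u

def Kc (L : ℕ) (δ : ℝ) (u v : ℕ) : ℂ :=
  ∑ x ∈ Finset.Icc 1 L, ∑ y ∈ Finset.Icc 1 L,
    Fc L δ x y * (alphaC L δ x u * alphaC L δ y v)

lemma sum_pair {M : Type*} [AddCommMonoid M] (L a b : ℕ)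
    (ha : a ∈ Finset.Icc 1 L) (hb : b ∈ Finset.Icc 1 L) (h : ℕ → ℕ → M) :
    ∑ x ∈ Finset.Icc 1 L, ∑ y ∈ Finset.Icc 1 L,
      (if x = a ∧ y = b then h x y else 0) = h a b := by
  have h1 : ∀ x ∈ Finset.Icc 1 L,
      (∑ y ∈ Finset.Icc 1 L, if x = a ∧ y = b then h x y else 0)
        = if x = a then h x b else 0 := by
    intro x hx
    by_cases hxa : x = a
    · simp only [hxa, true_and, if_pos rfl]
      exact (Finset.sum_ite_eq' _ b (h a)).trans (if_pos hb)
    · simp [hxa]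
  rw [Finset.sum_congr rfl h1, Finset.sum_ite_eq' _ a (fun x => h x b), if_pos ha]

lemma sum_succ1 {M : Type*} [AddCommMonoid M] (L : ℕ) (h : ℕ → ℕ → M) :
    ∑ x ∈ Finset.Icc 1 L, ∑ y ∈ Finset.Icc 1 L, (if y = x + 1 then h x y else 0)
      = ∑ x ∈ Finset.Icc 1 L, (if x + 1 ≤ L then h x (x+1) else 0) := by
  refine Finset.sum_congr rfl fun x hx => ?_
  rw [Finset.sum_ite_eq' _ (x+1) (h x)]
  exact if_congr (by rw [Finset.mem_Icc]; omega) rfl rfl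

lemma sum_succ2 {M : Type*} [AddCommMonoid M] (L : ℕ) (h : ℕ → ℕ → M) :
    ∑ x ∈ Finset.Icc 1 L, ∑ y ∈ Finset.Icc 1 L, (if x = y + 1 then h x y else 0)
      = ∑ y ∈ Finset.Icc 1 L, (if y + 1 ≤ L then h (y+1) y else 0) := by
  rw [Finset.sum_comm]
  refine Finset.sum_congr rfl fun y hy => ?_
  rw [Finset.sum_ite_eq' _ (y+1) (fun x => h x y)]
  exact if_congr (by rw [Finset.mem_Icc]; omega) rfl rfl

lemma Fc_mul (L : ℕ) (hL : 3 ≤ L) (δ : ℝ) (g : ℕ → ℕ → ℂ) (x y : ℕ) :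
    Fc L δ x y * g x y
      = (-(Real.sin δ : ℂ)/2) *
          ((if y = x + 1 then g x y else 0) + (if x = 1 ∧ y = L then g x y else 0)
            - (if x = y + 1 then g x y else 0) - (if x = L ∧ y = 1 then g x y else 0)) := by
  unfold Fc
  split_ifs <;> first | (exfalso; omega) | ring

lemma g_succ (L : ℕ) (hL : 3 ≤ L) (u v x : ℕ) (hu : 1 ≤ u) (huv : u < v) (hv : v ≤ L)
    (hx1 : 1 ≤ x) (hx2 : x + 1 ≤ L) :
    gC L u v x (x+1) = (if v = x + 1 then 2 else 0) + (if u = x + 1 then 2 else 0) := by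
  unfold gC epsC
  split_ifs <;> first | (exfalso; omega) | norm_num

lemma g_anti (L u v a b : ℕ) : gC L u v b a = -gC L u v a b := by
  unfold gC; ring

lemma g_1L (L : ℕ) (hL : 3 ≤ L) (u v : ℕ) (hu : 1 ≤ u) (huv : u < v) (hv : v ≤ L) :
    gC L u v 1 L = if u = 1 then 2 else 0 := by
  unfold gC epsC
  split_ifs <;> first | (exfalso; omega) | norm_num

lemma Ediff (L : ℕ) (hL : 3 ≤ L) (δ : ℝ) (u v : ℕ)
    (hu : 1 ≤ u) (huv : u < v) (hv : v ≤ L) :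
    ∑ x ∈ Finset.Icc 1 L, ∑ y ∈ Finset.Icc 1 L, Fc L δ x y * gC L u v x y
      = -4 * (Real.sin δ : ℂ) := by
  have e1 : ∑ x ∈ Finset.Icc 1 L, ∑ y ∈ Finset.Icc 1 L, Fc L δ x y * gC L u v x y
      = ∑ x ∈ Finset.Icc 1 L, ∑ y ∈ Finset.Icc 1 L, (-(Real.sin δ : ℂ)/2) *
          ((if y = x + 1 then gC L u v x y else 0) + (if x = 1 ∧ y = L then gC L u v x y else 0)
            - (if x = y + 1 then gC L u v x y else 0)
            - (if x = L ∧ y = 1 then gC L u v x y else 0)) :=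
    Finset.sum_congr rfl fun x _ => Finset.sum_congr rfl fun y _ => Fc_mul L hL δ (gC L u v) x y
  rw [e1]
  simp only [← Finset.mul_sum, Finset.sum_sub_distrib, Finset.sum_add_distrib]
  rw [sum_succ1 L (gC L u v), sum_succ2 L (gC L u v),
    sum_pair L 1 L (by rw [Finset.mem_Icc]; omega) (by rw [Finset.mem_Icc]; omega) (gC L u v),
    sum_pair L L 1 (by rw [Finset.mem_Icc]; omega) (by rw [Finset.mem_Icc]; omega) (gC L u v)]
  -- combine the two succ-sums
  have e2 : (∑ x ∈ Finset.Icc 1 L, (if x + 1 ≤ L then gC L u v x (x+1) else 0))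
        - (∑ y ∈ Finset.Icc 1 L, (if y + 1 ≤ L then gC L u v (y+1) y else 0))
      = ∑ x ∈ Finset.Icc 1 L,
          ((if v = x + 1 then (4:ℂ) else 0) + (if u = x + 1 then (4:ℂ) else 0)) := by
    rw [← Finset.sum_sub_distrib]
    refine Finset.sum_congr rfl fun x hx => ?_
    rw [Finset.mem_Icc] at hx
    by_cases h : x + 1 ≤ L
    · rw [if_pos h, if_pos h, g_anti L u v x (x+1), g_succ L hL u v x hu huv hv hx.1 h]
      split_ifs <;> ring
    · rw [if_neg h, if_neg h, if_neg (by omega : ¬ v = x + 1),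
        if_neg (by omega : ¬ u = x + 1)]
      ring
  have e3 : (∑ x ∈ Finset.Icc 1 L, (if v = x + 1 then (4:ℂ) else 0)) = 4 := by
    have : ∀ x, (if v = x + 1 then (4:ℂ) else 0) = (if x = v - 1 then (4:ℂ) else 0) :=
      fun x => if_congr (by omega) rfl rfl
    rw [Finset.sum_congr rfl fun x _ => this x,
      Finset.sum_ite_eq' _ (v-1) (fun _ => (4:ℂ)), if_pos (by rw [Finset.mem_Icc]; omega)]
  have e4 : (∑ x ∈ Finset.Icc 1 L, (if u = x + 1 then (4:ℂ) else 0))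
      = if u = 1 then 0 else 4 := by
    by_cases hu1 : u = 1
    · rw [if_pos hu1]
      refine Finset.sum_eq_zero fun x hx => ?_
      rw [Finset.mem_Icc] at hx
      exact if_neg (by omega)
    · rw [if_neg hu1]
      have : ∀ x, (if u = x + 1 then (4:ℂ) else 0) = (if x = u - 1 then (4:ℂ) else 0) :=
        fun x => if_congr (by omega) rfl rfl
      rw [Finset.sum_congr rfl fun x _ => this x,
        Finset.sum_ite_eq' _ (u-1) (fun _ => (4:ℂ)), if_pos (by rw [Finset.mem_Icc]; omega)]
  have e5 : gC L u v L 1 = -gC L u v 1 L := g_anti L u v 1 L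
  have e6 : gC L u v 1 L = if u = 1 then 2 else 0 := g_1L L hL u v hu huv hv
  rw [Finset.sum_add_distrib] at e2
  -- now assemble
  have lhs_eq : (∑ x ∈ Finset.Icc 1 L, (if x + 1 ≤ L then gC L u v x (x+1) else 0))
        + gC L u v 1 L
        - (∑ y ∈ Finset.Icc 1 L, (if y + 1 ≤ L then gC L u v (y+1) y else 0))
        - gC L u v L 1 = 8 := by
    have e7 : (∑ x ∈ Finset.Icc 1 L, (if x + 1 ≤ L then gC L u v x (x+1) else 0))
          - (∑ y ∈ Finset.Icc 1 L, (if y + 1 ≤ L then gC L u v (y+1) y else 0))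
        = 4 + (if u = 1 then 0 else 4) := by rw [e2, e3, e4]
    rw [e5, e6]
    by_cases hu1 : u = 1
    · simp only [if_pos hu1] at e7 ⊢; linear_combination e7
    · simp only [if_neg hu1] at e7 ⊢; linear_combination e7
  linear_combination (-(Real.sin δ : ℂ)/2) * lhs_eq

lemma Kdiff (L : ℕ) (hL : 3 ≤ L) (δ : ℝ) (hs : (Real.sin δ : ℂ) ≠ 0)
    (u v : ℕ) (hu : 1 ≤ u) (huv : u < v) (hv : v ≤ L) :
    Kc L δ u v - Kc L δ v u
      = (-(4 / (Real.sin δ : ℂ))) * ((wR δ u : ℂ) * (wR δ v : ℂ)) := by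
  have e1 : Kc L δ u v - Kc L δ v u
      = ∑ x ∈ Finset.Icc 1 L, ∑ y ∈ Finset.Icc 1 L,
          ((((Real.sin δ:ℂ))⁻¹ * ((Real.sin δ:ℂ))⁻¹ * ((wR δ u:ℂ) * (wR δ v:ℂ)))
            * (Fc L δ x y * gC L u v x y)) := by
    unfold Kc
    rw [← Finset.sum_sub_distrib]
    refine Finset.sum_congr rfl fun x _ => ?_
    rw [← Finset.sum_sub_distrib]
    refine Finset.sum_congr rfl fun y _ => ?_
    unfold alphaC gC
    ring
  rw [e1]
  simp only [← Finset.mul_sum]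
  rw [Ediff L hL δ u v hu huv hv]
  linear_combination ((-4:ℂ) * (wR δ u:ℂ) * (wR δ v:ℂ) * ((Real.sin δ:ℂ))⁻¹) * (inv_mul_cancel₀ hs)

lemma sum3_swap {M : Type*} [AddCommMonoid M] (I : Finset ℕ) (g : ℕ → ℕ → ℕ → M) :
    ∑ x ∈ I, ∑ u ∈ I, ∑ v ∈ I, g x u v = ∑ u ∈ I, ∑ v ∈ I, ∑ x ∈ I, g x u v := by
  rw [Finset.sum_comm]
  exact Finset.sum_congr rfl fun u _ => Finset.sum_comm

lemma sum4_swap {M : Type*} [AddCommMonoid M] (I : Finset ℕ) (f : ℕ → ℕ → ℕ → ℕ → M) :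
    ∑ x ∈ I, ∑ y ∈ I, ∑ u ∈ I, ∑ v ∈ I, f x y u v
      = ∑ u ∈ I, ∑ v ∈ I, ∑ x ∈ I, ∑ y ∈ I, f x y u v :=
  calc ∑ x ∈ I, ∑ y ∈ I, ∑ u ∈ I, ∑ v ∈ I, f x y u v
      = ∑ x ∈ I, ∑ u ∈ I, ∑ v ∈ I, ∑ y ∈ I, f x y u v :=
        Finset.sum_congr rfl fun x _ => sum3_swap I (fun y u v => f x y u v)
    _ = ∑ u ∈ I, ∑ v ∈ I, ∑ x ∈ I, ∑ y ∈ I, f x y u v := sum3_swap I _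

variable {V : Type*} [AddCommGroup V] [Module ℂ V]

/-- `ã_x† = (1/sin δ)(Σ_{y=1}^{x} w_y c_y† − Σ_{y=x+1}^{L} w_y c_y†)` for `1 ≤ x ≤ L−1`,
and `ã_L† = (1/sin δ) Σ_{y=1}^{L} w_y c_y†` (applied to the family `c†`). -/
def taOp (L : ℕ) (δ : ℝ) (c : ℕ → Module.End ℂ V) (x : ℕ) : Module.End ℂ V :=
  if x = L then ((Real.sin δ : ℂ))⁻¹ • ∑ y ∈ Finset.Icc 1 L, (wR δ y : ℂ) • c y
  else ((Real.sin δ : ℂ))⁻¹ •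
    (∑ y ∈ Finset.Icc 1 x, (wR δ y : ℂ) • c y - ∑ y ∈ Finset.Icc (x+1) L, (wR δ y : ℂ) • c y)

lemma ta_expand {V : Type*} [AddCommGroup V] [Module ℂ V] (L : ℕ) (δ : ℝ)
    (c : ℕ → Module.End ℂ V) (x : ℕ) (hx : x ∈ Finset.Icc 1 L) :
    taOp L δ c x = ∑ u ∈ Finset.Icc 1 L, alphaC L δ x u • c u := by
  rw [Finset.mem_Icc] at hx
  by_cases hxL : x = L
  · subst hxL
    rw [taOp, if_pos rfl, Finset.smul_sum]
    refine Finset.sum_congr rfl fun u _ => ?_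
    rw [smul_smul]
    unfold alphaC epsC
    rw [if_pos rfl]
    congr 1; ring
  · rw [taOp, if_neg hxL]
    have hsplit : Finset.Icc 1 L = Finset.Icc 1 x ∪ Finset.Icc (x+1) L := by
      ext a; simp only [Finset.mem_Icc, Finset.mem_union]; omega
    have hdisj : Disjoint (Finset.Icc 1 x) (Finset.Icc (x+1) L) := by
      rw [Finset.disjoint_left]; intro a ha hb
      rw [Finset.mem_Icc] at ha hb; omega
    rw [hsplit, Finset.sum_union hdisj]
    have h1 : ∑ u ∈ Finset.Icc 1 x, alphaC L δ x u • c u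
        = ((Real.sin δ : ℂ))⁻¹ • ∑ y ∈ Finset.Icc 1 x, (wR δ y : ℂ) • c y := by
      rw [Finset.smul_sum]
      refine Finset.sum_congr rfl fun u hu => ?_
      rw [Finset.mem_Icc] at hu
      rw [smul_smul]
      unfold alphaC epsC
      rw [if_neg hxL, if_pos hu.2]
      congr 1; ring
    have h2 : ∑ u ∈ Finset.Icc (x+1) L, alphaC L δ x u • c u
        = -(((Real.sin δ : ℂ))⁻¹ • ∑ y ∈ Finset.Icc (x+1) L, (wR δ y : ℂ) • c y) := by
      rw [Finset.smul_sum, ← Finset.sum_neg_distrib]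
      refine Finset.sum_congr rfl fun u hu => ?_
      rw [Finset.mem_Icc] at hu
      rw [smul_smul, ← neg_smul]
      unfold alphaC epsC
      rw [if_neg hxL, if_neg (by omega : ¬ u ≤ x)]
      congr 1; ring
    rw [h1, h2, smul_sub]
    abel

/-- The pair operator `ζ† = Σ_{x,y=1}^{L} F_{x,y} ã_x† ã_y†`. -/
def zetaDag (L : ℕ) (δ : ℝ) (cdag : ℕ → Module.End ℂ V) : Module.End ℂ V :=
  ∑ x ∈ Finset.Icc 1 L, ∑ y ∈ Finset.Icc 1 L,
    Fc L δ x y • (taOp L δ cdag x * taOp L δ cdag y)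

/-- `ζ† = −(4/sin δ) Σ_{1 ≤ x < y ≤ L} w_x w_y c_x† c_y†`. -/
theorem statement2 (L : ℕ) (hL3 : 3 ≤ L) (hLodd : Odd L)
    (δ : ℝ) (hδ0 : 0 < δ) (hδ1 : δ ≤ Real.pi / 2)
    (c cdag : ℕ → Module.End ℂ V)
    (car_cc : ∀ x ∈ Finset.Icc 1 L, ∀ y ∈ Finset.Icc 1 L, c x * c y + c y * c x = 0)
    (car_dd : ∀ x ∈ Finset.Icc 1 L, ∀ y ∈ Finset.Icc 1 L,
      cdag x * cdag y + cdag y * cdag x = 0)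
    (car_dc : ∀ x ∈ Finset.Icc 1 L, ∀ y ∈ Finset.Icc 1 L,
      cdag x * c y + c y * cdag x = if x = y then 1 else 0) :
    zetaDag L δ cdag
      = (-(4 / (Real.sin δ : ℂ))) •
          ∑ x ∈ Finset.Icc 1 L, ∑ y ∈ Finset.Icc (x+1) L,
            ((wR δ x : ℂ) * (wR δ y : ℂ)) • (cdag x * cdag y) := by

  classical
  have hπ : δ < Real.pi := lt_of_le_of_lt hδ1 (by linarith [Real.pi_pos])
  have hsR : Real.sin δ ≠ 0 := ne_of_gt (Real.sin_pos_of_pos_of_lt_pi hδ0 hπ)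
  have hs : (Real.sin δ : ℂ) ≠ 0 := by exact_mod_cast hsR
  have hdd0 : ∀ x ∈ Finset.Icc 1 L, cdag x * cdag x = 0 := by
    intro x hx
    have h := car_dd x hx x hx
    have h2 : (2:ℂ) • (cdag x * cdag x) = 0 := by rw [two_smul]; exact h
    rcases smul_eq_zero.mp h2 with h3 | h3
    · norm_num at h3
    · exact h3
  have hddneg : ∀ x ∈ Finset.Icc 1 L, ∀ y ∈ Finset.Icc 1 L,
      cdag y * cdag x = -(cdag x * cdag y) :=
    fun x hx y hy => eq_neg_of_add_eq_zero_left (car_dd y hy x hx)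
  -- Step 1: expand zetaDag into quadruple sum
  have expand : zetaDag L δ cdag
      = ∑ x ∈ Finset.Icc 1 L, ∑ y ∈ Finset.Icc 1 L, ∑ u ∈ Finset.Icc 1 L, ∑ v ∈ Finset.Icc 1 L,
          (Fc L δ x y * (alphaC L δ x u * alphaC L δ y v)) • (cdag u * cdag v) := by
    unfold zetaDag
    refine Finset.sum_congr rfl fun x hx => Finset.sum_congr rfl fun y hy => ?_
    rw [ta_expand L δ cdag x hx, ta_expand L δ cdag y hy, Finset.sum_mul_sum,
      Finset.smul_sum]
    refine Finset.sum_congr rfl fun u _ => ?_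
    rw [Finset.smul_sum]
    refine Finset.sum_congr rfl fun v _ => ?_
    rw [smul_mul_smul_comm, smul_smul]
  have step2 : zetaDag L δ cdag
      = ∑ u ∈ Finset.Icc 1 L, ∑ v ∈ Finset.Icc 1 L, Kc L δ u v • (cdag u * cdag v) := by
    rw [expand, sum4_swap]
    refine Finset.sum_congr rfl fun u _ => Finset.sum_congr rfl fun v _ => ?_
    unfold Kc
    rw [Finset.sum_smul]
    exact Finset.sum_congr rfl fun x _ => (Finset.sum_smul).symm
  rw [step2]
  -- Step 2: trichotomy split
  have tri : ∀ u v : ℕ, Kc L δ u v • (cdag u * cdag v)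
      = (if u < v then Kc L δ u v • (cdag u * cdag v) else 0)
        + (if v < u then Kc L δ u v • (cdag u * cdag v) else 0)
        + (if u = v then Kc L δ u v • (cdag u * cdag v) else 0) := by
    intro u v
    rcases lt_trichotomy u v with h | h | h
    · rw [if_pos h, if_neg (by omega), if_neg (by omega), add_zero, add_zero]
    · rw [if_neg (by omega), if_neg (by omega), if_pos h, zero_add, zero_add]
    · rw [if_neg (by omega), if_pos h, if_neg (by omega), zero_add, add_zero]
  rw [Finset.sum_congr rfl fun u _ => Finset.sum_congr rfl fun v _ => tri u v]
  simp only [Finset.sum_add_distrib]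
  have hC : ∑ u ∈ Finset.Icc 1 L, ∑ v ∈ Finset.Icc 1 L,
      (if u = v then Kc L δ u v • (cdag u * cdag v) else 0) = 0 := by
    refine Finset.sum_eq_zero fun u hu => ?_
    rw [Finset.sum_ite_eq (Finset.Icc 1 L) u (fun v => Kc L δ u v • (cdag u * cdag v)),
      if_pos hu, hdd0 u hu, smul_zero]
  have hB : (∑ u ∈ Finset.Icc 1 L, ∑ v ∈ Finset.Icc 1 L,
        (if v < u then Kc L δ u v • (cdag u * cdag v) else 0))
      = ∑ u ∈ Finset.Icc 1 L, ∑ v ∈ Finset.Icc 1 L,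
        (if u < v then Kc L δ v u • (cdag v * cdag u) else 0) := Finset.sum_comm
  rw [hC, add_zero, hB]
  have hAB : (∑ u ∈ Finset.Icc 1 L, ∑ v ∈ Finset.Icc 1 L,
        (if u < v then Kc L δ u v • (cdag u * cdag v) else 0))
      + (∑ u ∈ Finset.Icc 1 L, ∑ v ∈ Finset.Icc 1 L,
        (if u < v then Kc L δ v u • (cdag v * cdag u) else 0))
      = ∑ u ∈ Finset.Icc 1 L, ∑ v ∈ Finset.Icc 1 L,
          (if u < v then (-(4 / (Real.sin δ : ℂ))) •
            (((wR δ u : ℂ) * (wR δ v : ℂ)) • (cdag u * cdag v)) else 0) := by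
    rw [← Finset.sum_add_distrib]
    refine Finset.sum_congr rfl fun u hu => ?_
    rw [← Finset.sum_add_distrib]
    refine Finset.sum_congr rfl fun v hv => ?_
    by_cases h : u < v
    · rw [if_pos h, if_pos h, if_pos h, hddneg u hu v hv, smul_neg, ← sub_eq_add_neg,
        ← sub_smul]
      rw [Finset.mem_Icc] at hu hv
      rw [Kdiff L hL3 δ hs u v hu.1 h hv.2, ← smul_smul]
    · rw [if_neg h, if_neg h, if_neg h, add_zero]
  rw [hAB]
  -- pull out the scalar and convert the inner range
  rw [Finset.smul_sum]
  refine Finset.sum_congr rfl fun u _ => ?_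
  rw [Finset.smul_sum]
  have : ∀ v, (if u < v then (-(4 / (Real.sin δ : ℂ))) •
        (((wR δ u : ℂ) * (wR δ v : ℂ)) • (cdag u * cdag v)) else 0)
      = (-(4 / (Real.sin δ : ℂ))) •
        (if u < v then ((wR δ u : ℂ) * (wR δ v : ℂ)) • (cdag u * cdag v) else 0) := by
    intro v
    by_cases h : u < v
    · rw [if_pos h, if_pos h]
    · rw [if_neg h, if_neg h, smul_zero]
  rw [Finset.sum_congr rfl fun v _ => this v]
  rw [← Finset.smul_sum]
  congr 1
  have hfil : (Finset.Icc 1 L).filter (fun v => u < v) = Finset.Icc (u+1) L := by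
    ext v
    simp only [Finset.mem_filter, Finset.mem_Icc]
    omega
  rw [← Finset.sum_filter, hfil]
  rw [Finset.smul_sum]

end
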